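/- arXiv:1510.02565 — 8 statements merged into one kernel-verified Lean document; each statement's English description precedes it below -/
import Mathlib

section
/- A point (x,y) ∈ S is a fixed point of the evolution operator H if and only if x = (1,0,…,0) or y = (1,0,…,0); that is, Fix(H) = {((1,0,…,0),(y_1,…,y_ν)) : Σ_{k=1}^ν y_k = 1, y_k ≥ 0} ∪ {((x_1,…,x_n),(1,0,…,0)) : Σ_{i=1}^n x_i = 1, x_i ≥ 0}. -/
/-- The evolution operator `H` of the hard-constrained bisexual population on
`ℝ^{n+1} × ℝ^{ν+1}` (female types `0,…,n`, male types `0,…,ν`; type "1" is index `0`). -/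
def evolH (n ν : ℕ) (z : (Fin (n + 1) → ℝ) × (Fin (ν + 1) → ℝ)) :
    (Fin (n + 1) → ℝ) × (Fin (ν + 1) → ℝ) :=
  (fun j => if j = 0 then 1 - z.2 0 * (1 - z.1 0) else z.2 0 * z.1 j,
   fun l => if l = 0 then 1 - z.1 0 * (1 - z.2 0) else z.1 0 * z.2 l)

/-!
The `x₁`-coordinate of the fixed-point equation reads `(1 - x₁)(1 - y₁) = 0`, and a point of a
standard simplex with a coordinate equal to `1` is the corresponding vertex. Conversely, when `x`
or `y` is the vertex `(1,0,…,0)`, `H` fixes the point whatever the other factor is.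
-/

theorem eq_single_of_mem_stdSimplex_of_apply_eq_one {𝕜 ι : Type*} [Ring 𝕜] [PartialOrder 𝕜]
    [IsOrderedRing 𝕜] [Fintype ι] [DecidableEq ι] {f : ι → 𝕜} (hf : f ∈ stdSimplex 𝕜 ι)
    {i : ι} (hi : f i = 1) : f = Pi.single i 1 := by
  funext j
  obtain rfl | hji := eq_or_ne j i
  · simpa using hi
  have hle : f j + f i ≤ 1 := by
    rw [← hf.2, ← Finset.sum_pair hji]
    exact Finset.sum_le_sum_of_subset_of_nonneg (Finset.subset_univ _) fun k _ _ => hf.1 k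
  rw [Pi.single_eq_of_ne hji]
  exact le_antisymm (by simpa [hi] using hle) (hf.1 j)

section evolH
variable {n ν : ℕ} {z : (Fin (n + 1) → ℝ) × (Fin (ν + 1) → ℝ)}

theorem evolH_eq_self_of_fst_eq_single (h : z.1 = Pi.single 0 1) : evolH n ν z = z := by
  obtain ⟨x, y⟩ := z
  subst h
  ext j <;> by_cases hj : j = 0 <;> simp [evolH, hj]

theorem evolH_eq_self_of_snd_eq_single (h : z.2 = Pi.single 0 1) : evolH n ν z = z := by
  obtain ⟨x, y⟩ := z
  subst h
  ext j <;> by_cases hj : j = 0 <;> simp [evolH, hj]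

theorem fst_zero_eq_one_or_snd_zero_eq_one_of_evolH_eq_self (h : evolH n ν z = z) :
    z.1 0 = 1 ∨ z.2 0 = 1 := by
  have h0 : 1 - z.2 0 * (1 - z.1 0) = z.1 0 := by
    simpa [evolH] using congrFun (congrArg Prod.fst h) 0
  have : (1 - z.1 0) * (1 - z.2 0) = 0 := by linear_combination h0
  rcases mul_eq_zero.mp this with h | h
  · exact Or.inl (by linarith)
  · exact Or.inr (by linarith)

end evolH

/-- Fix(H) is the union of the two faces `{x = (1,0,…,0)}` and `{y = (1,0,…,0)}` of `S`. -/
theorem fix_evolH (n ν : ℕ) :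
    {z ∈ stdSimplex ℝ (Fin (n + 1)) ×ˢ stdSimplex ℝ (Fin (ν + 1)) | evolH n ν z = z} =
      {z ∈ stdSimplex ℝ (Fin (n + 1)) ×ˢ stdSimplex ℝ (Fin (ν + 1)) |
          z.1 = Pi.single 0 1} ∪
      {z ∈ stdSimplex ℝ (Fin (n + 1)) ×ˢ stdSimplex ℝ (Fin (ν + 1)) |
          z.2 = Pi.single 0 1} := by
  ext z
  simp only [Set.mem_union, Set.mem_ofPred_eq, ← and_or_left]
  refine and_congr_right fun hz => ⟨fun hfix => ?_, ?_⟩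
  · exact (fst_zero_eq_one_or_snd_zero_eq_one_of_evolH_eq_self hfix).imp
      (eq_single_of_mem_stdSimplex_of_apply_eq_one hz.1)
      (eq_single_of_mem_stdSimplex_of_apply_eq_one hz.2)
  · rintro (h | h)
    exacts [evolH_eq_self_of_fst_eq_single h, evolH_eq_self_of_snd_eq_single h]
end

section
/- Let z^{(0)} = ((x_1^{(0)},…,x_n^{(0)}),(y_1^{(0)},…,y_ν^{(0)})) ∈ S with x_1^{(0)} ≠ 0 and y_1^{(0)} ≠ 0, and let z^{(m)} = H^m(z^{(0)}). Then: (a) if x_1^{(0)} = y_1^{(0)}, then lim_{m→∞} z^{(m)} = ((1,0,…,0),(1,0,…,0)); (b) if x_1^{(0)} > y_1^{(0)}, then lim_{m→∞} z^{(m)} = ((1,0,…,0),(1−x_1^{(0)}+y_1^{(0)}, y*_2,…,y*_ν)) where y*_l = (x_1^{(0)}−y_1^{(0)}) y_l^{(0)} / (1−y_1^{(0)}) for l = 2,…,ν; (c) if x_1^{(0)} < y_1^{(0)}, then lim_{m→∞} z^{(m)} = ((1+x_1^{(0)}−y_1^{(0)}, x*_2,…,x*_n),(1,0,…,0)) where x*_j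 = (y_1^{(0)}−x_1^{(0)}) x_j^{(0)} / (1−x_1^{(0)}) for j = 2,…,n. -/
open Filter Topology

/-!
Write `e = (1, 0, …, 0)`. The operator acts by `x' - e = y₁ • (x - e)` and `y' - e = x₁ • (y - e)`,
so each component stays on the segment from its initial value to `e`, and the whole trajectory is
governed by the scalars `u = 1 - x₁`, `v = 1 - y₁`. These obey `u' = (1 - v) u`, `v' = (1 - u) v`,
so `v - u` is invariant; if `u₀ ≤ v₀` then `u` decreases to a nonnegative fixed point of
`t ↦ (1 - (v₀ - u₀) - t) t`, which must be `0`, and `v → v₀ - u₀`. Exchanging the two components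
conjugates `H` to the operator with the roles of `x` and `y` swapped, which gives the case `x₁ < y₁`.
-/

open Finset

lemma tendsto_zero_of_logistic {u : ℕ → ℝ} {c : ℝ} (hc : 0 ≤ c) (h0 : 0 ≤ u 0)
    (h1 : u 0 + c ≤ 1) (hu : ∀ m, u (m + 1) = (1 - c - u m) * u m) :
    Tendsto u atTop (𝓝 0) := by
  have hbounds : ∀ m, 0 ≤ u m ∧ u m + c ≤ 1 := by
    intro m
    induction m with
    | zero => exact ⟨h0, h1⟩
    | succ m ih =>
      obtain ⟨ih0, ih1⟩ := ih
      rw [hu]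
      constructor <;> nlinarith
  have hanti : Antitone u := antitone_nat_of_succ_le fun m => by
    obtain ⟨hm0, hm1⟩ := hbounds m
    rw [hu]; nlinarith
  have hlim := tendsto_atTop_ciInf hanti ⟨0, by rintro _ ⟨m, rfl⟩; exact (hbounds m).1⟩
  set L := ⨅ m, u m
  have hL : 0 ≤ L := le_ciInf fun m => (hbounds m).1
  have hfix : L = (1 - c - L) * L :=
    tendsto_nhds_unique (hlim.comp (tendsto_add_atTop_nat 1))
      (((tendsto_const_nhds.sub hlim).mul hlim).congr fun m => (hu m).symm)
  have hL0 : L = 0 := by nlinarith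
  rwa [hL0] at hlim

lemma eq_single_of_mem_stdSimplex {𝕜 ι : Type*} [Ring 𝕜] [PartialOrder 𝕜] [IsOrderedRing 𝕜]
    [Fintype ι] [DecidableEq ι] {x : ι → 𝕜} (hx : x ∈ stdSimplex 𝕜 ι) {i : ι} (hi : x i = 1) :
    x = Pi.single i 1 := by
  funext j
  rcases eq_or_ne j i with rfl | hj
  · simp [hi]
  · have hsum := add_le_sum (fun k _ => hx.1 k) (mem_univ i) (mem_univ j) hj.symm
    rw [hx.2, hi, add_le_iff_nonpos_right] at hsum
    rw [Pi.single_eq_of_ne hj]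
    exact le_antisymm hsum (hx.1 j)

section evolH

variable {n ν : ℕ}

lemma evolH_fst_sub_single (z : (Fin (n + 1) → ℝ) × (Fin (ν + 1) → ℝ)) :
    (evolH n ν z).1 - Pi.single 0 1 = z.2 0 • (z.1 - Pi.single 0 1) := by
  funext j
  rcases eq_or_ne j 0 with rfl | hj
  · simp [evolH]; ring
  · simp [evolH, hj]

lemma semiconj_swap_evolH : Function.Semiconj Prod.swap (evolH n ν) (evolH ν n) :=
  fun _ => rfl

lemma iterate_evolH_fst_sub_single (z : (Fin (n + 1) → ℝ) × (Fin (ν + 1) → ℝ)) (m : ℕ) :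
    ((evolH n ν)^[m] z).1 - Pi.single 0 1 =
      (∏ k ∈ range m, ((evolH n ν)^[k] z).2 0) • (z.1 - Pi.single 0 1) := by
  induction m with
  | zero => simp
  | succ m ih =>
    rw [Function.iterate_succ_apply', evolH_fst_sub_single, ih, prod_range_succ, mul_comm,
      mul_smul]

lemma iterate_evolH_snd_zero_sub_fst_zero (z : (Fin (n + 1) → ℝ) × (Fin (ν + 1) → ℝ)) (m : ℕ) :
    ((evolH n ν)^[m] z).2 0 - ((evolH n ν)^[m] z).1 0 = z.2 0 - z.1 0 := by
  induction m with
  | zero => rfl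
  | succ m ih =>
    rw [Function.iterate_succ_apply', ← ih]
    simp only [evolH, if_pos]
    ring

lemma tendsto_iterate_evolH_fst {z : (Fin (n + 1) → ℝ) × (Fin (ν + 1) → ℝ)}
    (hz : z.1 ∈ stdSimplex ℝ (Fin (n + 1))) {a : ℝ}
    (ha : Tendsto (fun m => ((evolH n ν)^[m] z).1 0) atTop (𝓝 a)) :
    Tendsto (fun m => ((evolH n ν)^[m] z).1) atTop
      (𝓝 (Pi.single 0 1 + ((1 - a) / (1 - z.1 0)) • (z.1 - Pi.single 0 1))) := by
  have hP := iterate_evolH_fst_sub_single z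
  rcases eq_or_ne (z.1 0) 1 with h1 | h1
  · have hfix : ∀ m, ((evolH n ν)^[m] z).1 = Pi.single 0 1 := fun m =>
      sub_eq_zero.mp <| by rw [hP, eq_single_of_mem_stdSimplex hz h1, sub_self, smul_zero]
    simp only [hfix, eq_single_of_mem_stdSimplex hz h1, sub_self, smul_zero, add_zero]
    exact tendsto_const_nhds
  · have hcoord : ∀ m, ∏ k ∈ range m, ((evolH n ν)^[k] z).2 0 =
        (1 - ((evolH n ν)^[m] z).1 0) / (1 - z.1 0) := fun m => by
      have h0 := congrFun (hP m) 0
      simp only [Pi.sub_apply, Pi.smul_apply, Pi.single_eq_same, smul_eq_mul] at h0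
      rw [eq_div_iff (sub_ne_zero.mpr h1.symm)]
      linarith
    have hlim := (tendsto_const_nhds (x := (Pi.single 0 1 : Fin (n + 1) → ℝ))).add
      ((((tendsto_const_nhds (x := (1 : ℝ))).sub ha).div_const (1 - z.1 0)).smul_const
        (z.1 - Pi.single 0 1))
    refine hlim.congr fun m => ?_
    rw [← hcoord, ← hP, add_sub_cancel]

lemma tendsto_iterate_evolH_snd {z : (Fin (n + 1) → ℝ) × (Fin (ν + 1) → ℝ)}
    (hz : z.2 ∈ stdSimplex ℝ (Fin (ν + 1))) {b : ℝ}
    (hb : Tendsto (fun m => ((evolH n ν)^[m] z).2 0) atTop (𝓝 b)) :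
    Tendsto (fun m => ((evolH n ν)^[m] z).2) atTop
      (𝓝 (Pi.single 0 1 + ((1 - b) / (1 - z.2 0)) • (z.2 - Pi.single 0 1))) := by
  have hswap : ∀ m, ((evolH n ν)^[m] z).2 = ((evolH ν n)^[m] z.swap).1 := fun m =>
    congrArg Prod.fst (semiconj_swap_evolH.iterate_right m z)
  simp only [hswap] at hb ⊢
  exact tendsto_iterate_evolH_fst hz hb

lemma tendsto_iterate_evolH_of_le {z : (Fin (n + 1) → ℝ) × (Fin (ν + 1) → ℝ)}
    (hz : z ∈ stdSimplex ℝ (Fin (n + 1)) ×ˢ stdSimplex ℝ (Fin (ν + 1))) (h : z.2 0 ≤ z.1 0) :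
    Tendsto (fun m => (evolH n ν)^[m] z) atTop
      (𝓝 ((Pi.single 0 1 : Fin (n + 1) → ℝ),
        fun l : Fin (ν + 1) =>
          if l = 0 then 1 - z.1 0 + z.2 0 else (z.1 0 - z.2 0) * z.2 l / (1 - z.2 0))) := by
  obtain ⟨hx, hy⟩ := hz
  set c := z.1 0 - z.2 0
  have hdiff := iterate_evolH_snd_zero_sub_fst_zero z
  have hu : Tendsto (fun m => 1 - ((evolH n ν)^[m] z).1 0) atTop (𝓝 0) := by
    refine tendsto_zero_of_logistic (c := c) (by linarith)
      (by simp [(mem_Icc_of_mem_stdSimplex hx 0).2]) (by simp [c, hy.1 0]) fun m => ?_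
    rw [Function.iterate_succ_apply']
    simp only [evolH, if_pos]
    linear_combination (1 - ((evolH n ν)^[m] z).1 0) * hdiff m
  have hx0 : Tendsto (fun m => ((evolH n ν)^[m] z).1 0) atTop (𝓝 1) := by
    simpa using (tendsto_const_nhds (x := (1 : ℝ))).sub hu
  have hy0 : Tendsto (fun m => ((evolH n ν)^[m] z).2 0) atTop (𝓝 (1 - c)) :=
    (hx0.sub_const c).congr fun m => by linarith [hdiff m]
  convert (tendsto_iterate_evolH_fst hx hx0).prodMk_nhds (tendsto_iterate_evolH_snd hy hy0)
    using 2
  -- If `y₁ = 1` then also `x₁ = 1`, so `c = 0` and the junk value `c / 0 = 0` does no harm.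
  have hc : c / (1 - z.2 0) * (1 - z.2 0) = c := div_mul_cancel_of_imp fun h1 => by
    linarith [(mem_Icc_of_mem_stdSimplex hx 0).2]
  refine Prod.ext (by simp) (funext fun l => ?_)
  rcases eq_or_ne l 0 with rfl | hl
  · simp only [if_pos, Pi.add_apply, Pi.smul_apply, Pi.sub_apply, Pi.single_eq_same,
      smul_eq_mul, sub_sub_cancel]
    linear_combination hc
  · simp [hl, div_mul_eq_mul_div]

lemma tendsto_iterate_evolH_of_swap {z : (Fin (n + 1) → ℝ) × (Fin (ν + 1) → ℝ)}
    {a : Fin (ν + 1) → ℝ} {b : Fin (n + 1) → ℝ}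
    (h : Tendsto (fun m => (evolH ν n)^[m] z.swap) atTop (𝓝 (a, b))) :
    Tendsto (fun m => (evolH n ν)^[m] z) atTop (𝓝 (b, a)) :=
  ((continuous_swap.tendsto _).comp h).congr fun m => semiconj_swap_evolH.iterate_right m z.swap

end evolH

theorem limit_evolH_general (n ν : ℕ) (z : (Fin (n + 1) → ℝ) × (Fin (ν + 1) → ℝ))
    (hz : z ∈ stdSimplex ℝ (Fin (n + 1)) ×ˢ stdSimplex ℝ (Fin (ν + 1))) :
    (z.1 0 = z.2 0 →
      Tendsto (fun m => (evolH n ν)^[m] z) atTop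
        (𝓝 ((Pi.single 0 1 : Fin (n + 1) → ℝ), (Pi.single 0 1 : Fin (ν + 1) → ℝ)))) ∧
    (z.1 0 > z.2 0 →
      Tendsto (fun m => (evolH n ν)^[m] z) atTop
        (𝓝 ((Pi.single 0 1 : Fin (n + 1) → ℝ),
          fun l : Fin (ν + 1) =>
            if l = 0 then 1 - z.1 0 + z.2 0 else (z.1 0 - z.2 0) * z.2 l / (1 - z.2 0)))) ∧
    (z.1 0 < z.2 0 →
      Tendsto (fun m => (evolH n ν)^[m] z) atTop
        (𝓝 ((fun j : Fin (n + 1) =>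
            if j = 0 then 1 + z.1 0 - z.2 0 else (z.2 0 - z.1 0) * z.1 j / (1 - z.1 0)),
          (Pi.single 0 1 : Fin (ν + 1) → ℝ)))) := by
  refine ⟨fun h => ?_, fun h => tendsto_iterate_evolH_of_le hz h.le, fun h => ?_⟩
  · convert tendsto_iterate_evolH_of_le hz h.ge using 3
    funext l
    by_cases hl : l = 0 <;> simp [hl, h]
  · convert tendsto_iterate_evolH_of_swap
      (tendsto_iterate_evolH_of_le (z := z.swap) ⟨hz.2, hz.1⟩ h.le) using 3
    funext j
    rcases eq_or_ne j 0 with rfl | hj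
    · simp only [if_pos, Prod.fst_swap, Prod.snd_swap]
      ring
    · simp [hj]

/-- Limits of trajectories of `H` starting from a point of `S` with `x₁⁰ ≠ 0` and `y₁⁰ ≠ 0`. -/
theorem limit_evolH (n ν : ℕ) (z : (Fin (n + 1) → ℝ) × (Fin (ν + 1) → ℝ))
    (hz : z ∈ stdSimplex ℝ (Fin (n + 1)) ×ˢ stdSimplex ℝ (Fin (ν + 1)))
    (hx : z.1 0 ≠ 0) (hy : z.2 0 ≠ 0) :
    (z.1 0 = z.2 0 →
      Tendsto (fun m => (evolH n ν)^[m] z) atTop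
        (𝓝 ((Pi.single 0 1 : Fin (n + 1) → ℝ), (Pi.single 0 1 : Fin (ν + 1) → ℝ)))) ∧
    (z.1 0 > z.2 0 →
      Tendsto (fun m => (evolH n ν)^[m] z) atTop
        (𝓝 ((Pi.single 0 1 : Fin (n + 1) → ℝ),
          fun l : Fin (ν + 1) =>
            if l = 0 then 1 - z.1 0 + z.2 0 else (z.1 0 - z.2 0) * z.2 l / (1 - z.2 0)))) ∧
    (z.1 0 < z.2 0 →
      Tendsto (fun m => (evolH n ν)^[m] z) atTop
        (𝓝 ((fun j : Fin (n + 1) =>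
            if j = 0 then 1 + z.1 0 - z.2 0 else (z.2 0 - z.1 0) * z.1 j / (1 - z.1 0)),
          (Pi.single 0 1 : Fin (ν + 1) → ℝ)))) :=
  limit_evolH_general n ν z hz
end

section
/- Along any trajectory z^{(m)} = H^m(z^{(0)}) of the operator H, the difference of the first coordinates is invariant: x_1^{(m+1)} − y_1^{(m+1)} = x_1^{(m)} − y_1^{(m)} for all m ≥ 0, and consequently x_1^{(m)} − y_1^{(m)} = x_1^{(0)} − y_1^{(0)} for all m ≥ 0. -/
theorem semiconj_evolH_fst_zero_sub_snd_zero (n ν : ℕ) :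
    Function.Semiconj (fun w : (Fin (n + 1) → ℝ) × (Fin (ν + 1) → ℝ) => w.1 0 - w.2 0)
      (evolH n ν) id := fun w => by
  simp only [evolH, if_pos, id_eq]
  ring

theorem evolH_first_coord_difference_invariant_general (n ν : ℕ)
    (z : (Fin (n + 1) → ℝ) × (Fin (ν + 1) → ℝ)) :
    (∀ m : ℕ,
      ((evolH n ν)^[m + 1] z).1 0 - ((evolH n ν)^[m + 1] z).2 0 =
        ((evolH n ν)^[m] z).1 0 - ((evolH n ν)^[m] z).2 0) ∧
    (∀ m : ℕ,
      ((evolH n ν)^[m] z).1 0 - ((evolH n ν)^[m] z).2 0 = z.1 0 - z.2 0) := by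
  have hH := semiconj_evolH_fst_zero_sub_snd_zero n ν
  refine ⟨fun m => ?_, fun m => ?_⟩
  · rw [Function.iterate_succ_apply']
    exact hH.eq _
  · simpa only [Function.iterate_id, id_eq] using (hH.iterate_right m).eq z

/-- Along any trajectory of `H`, the difference `x₁^{(m)} − y₁^{(m)}` of the first
coordinates is invariant. -/
theorem evolH_first_coord_difference_invariant (n ν : ℕ)
    (z : (Fin (n + 1) → ℝ) × (Fin (ν + 1) → ℝ))
    (hz : z ∈ stdSimplex ℝ (Fin (n + 1)) ×ˢ stdSimplex ℝ (Fin (ν + 1))) :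
    (∀ m : ℕ,
      ((evolH n ν)^[m + 1] z).1 0 - ((evolH n ν)^[m + 1] z).2 0 =
        ((evolH n ν)^[m] z).1 0 - ((evolH n ν)^[m] z).2 0) ∧
    (∀ m : ℕ,
      ((evolH n ν)^[m] z).1 0 - ((evolH n ν)^[m] z).2 0 = z.1 0 - z.2 0) :=
  evolH_first_coord_difference_invariant_general n ν z
end

section
/- Along any trajectory z^{(m)} = H^m(z^{(0)}) of the operator H, the sequences (x_1^{(m)})_m and (y_1^{(m)})_m are nondecreasing, and for each j = 2,…,n and l = 2,…,ν the sequences (x_j^{(m)})_m and (y_l^{(m)})_m are nonincreasing; consequently the limit z_* = lim_{m→∞} z^{(m)} exists and z_* is a fixed point of H. -/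
/-!
The increments of the first coordinates are `x₁' - x₁ = (1 - x₁)(1 - y₁) ≥ 0` and
`x_j' - x_j = -(1 - y₁) x_j ≤ 0`, and symmetrically for `y`. These signs only need the
coordinates to be nonnegative with `x₁, y₁ ≤ 1`, a condition that `H` preserves. Every
coordinate of the trajectory is therefore monotone and bounded, hence convergent, and the
limit is a fixed point because `H` is continuous.
-/

open Filter Topology

open Set

def headBounded (k : ℕ) : Set (Fin (k + 1) → ℝ) := {x | (∀ i, 0 ≤ x i) ∧ x 0 ≤ 1}

lemma stdSimplex_subset_headBounded (k : ℕ) : stdSimplex ℝ (Fin (k + 1)) ⊆ headBounded k :=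
  fun x hx => ⟨hx.1, by
    calc x 0 ≤ ∑ i, x i := Finset.single_le_sum (fun i _ => hx.1 i) (Finset.mem_univ 0)
    _ = 1 := hx.2⟩

section evolH

variable {n ν : ℕ} {z : (Fin (n + 1) → ℝ) × (Fin (ν + 1) → ℝ)}

@[simp]
lemma evolH_fst_zero : (evolH n ν z).1 0 = 1 - z.2 0 * (1 - z.1 0) := rfl

@[simp]
lemma evolH_fst_of_ne_zero {j : Fin (n + 1)} (hj : j ≠ 0) :
    (evolH n ν z).1 j = z.2 0 * z.1 j := if_neg hj

lemma evolH_swap : (evolH n ν z).swap = evolH ν n z.swap := rfl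

lemma iterate_evolH_snd (m : ℕ) : ((evolH n ν)^[m] z).2 = ((evolH ν n)^[m] z.swap).1 :=
  congrArg Prod.fst ((Function.Semiconj.iterate_right (fun _ => evolH_swap) m) z)

lemma continuous_evolH : Continuous (evolH n ν) := by
  refine .prodMk (continuous_pi fun j => ?_) (continuous_pi fun l => ?_) <;>
  split_ifs <;> fun_prop

lemma evolH_fst_mem_headBounded (hz : z ∈ headBounded n ×ˢ headBounded ν) :
    (evolH n ν z).1 ∈ headBounded n := by
  obtain ⟨⟨hx, hx₀⟩, ⟨hy, hy₀⟩⟩ := hz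
  have hx₀_nonneg := hx 0
  have hy₀_nonneg := hy 0
  refine ⟨fun j => ?_, ?_⟩
  · rcases eq_or_ne j 0 with rfl | hj
    · rw [evolH_fst_zero]
      nlinarith
    · rw [evolH_fst_of_ne_zero hj]
      exact mul_nonneg hy₀_nonneg (hx j)
  · rw [evolH_fst_zero]
    nlinarith

lemma mapsTo_evolH :
    MapsTo (evolH n ν) (headBounded n ×ˢ headBounded ν) (headBounded n ×ˢ headBounded ν) :=
  fun z hz =>
    ⟨evolH_fst_mem_headBounded hz, evolH_fst_mem_headBounded (z := z.swap) ⟨hz.2, hz.1⟩⟩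

lemma iterate_evolH_mem (hz : z ∈ headBounded n ×ˢ headBounded ν) (m : ℕ) :
    (evolH n ν)^[m] z ∈ headBounded n ×ˢ headBounded ν :=
  mapsTo_evolH.iterate m hz

lemma monotone_iterate_evolH_fst_zero (hz : z ∈ headBounded n ×ˢ headBounded ν) :
    Monotone fun m => ((evolH n ν)^[m] z).1 0 := by
  refine monotone_nat_of_le_succ fun m => ?_
  obtain ⟨⟨-, hx₀⟩, ⟨-, hy₀⟩⟩ := iterate_evolH_mem hz m
  rw [Function.iterate_succ_apply', evolH_fst_zero]
  nlinarith

lemma antitone_iterate_evolH_fst (hz : z ∈ headBounded n ×ˢ headBounded ν) {j : Fin (n + 1)}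
    (hj : j ≠ 0) : Antitone fun m => ((evolH n ν)^[m] z).1 j := by
  refine antitone_nat_of_succ_le fun m => ?_
  obtain ⟨⟨hx, -⟩, ⟨-, hy₀⟩⟩ := iterate_evolH_mem hz m
  rw [Function.iterate_succ_apply', evolH_fst_of_ne_zero hj]
  exact mul_le_of_le_one_left (hx j) hy₀

lemma exists_tendsto_iterate_evolH_fst (hz : z ∈ headBounded n ×ˢ headBounded ν)
    (j : Fin (n + 1)) : ∃ L, Tendsto (fun m => ((evolH n ν)^[m] z).1 j) atTop (𝓝 L) := by
  rcases eq_or_ne j 0 with rfl | hj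
  · exact ⟨_, tendsto_atTop_ciSup (monotone_iterate_evolH_fst_zero hz)
      ⟨1, forall_mem_range.2 fun m => (iterate_evolH_mem hz m).1.2⟩⟩
  · exact ⟨_, tendsto_atTop_ciInf (antitone_iterate_evolH_fst hz hj)
      ⟨0, forall_mem_range.2 fun m => (iterate_evolH_mem hz m).1.1 j⟩⟩

lemma exists_tendsto_iterate_evolH (hz : z ∈ headBounded n ×ˢ headBounded ν) :
    ∃ zs, Tendsto (fun m => (evolH n ν)^[m] z) atTop (𝓝 zs) := by
  have hz' : z.swap ∈ headBounded ν ×ˢ headBounded n := ⟨hz.2, hz.1⟩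
  choose L₁ hL₁ using exists_tendsto_iterate_evolH_fst hz
  choose L₂ hL₂ using exists_tendsto_iterate_evolH_fst hz'
  simp only [← iterate_evolH_snd] at hL₂
  exact ⟨(L₁, L₂), (tendsto_pi_nhds.2 hL₁).prodMk_nhds (tendsto_pi_nhds.2 hL₂)⟩

end evolH

/-- Along any trajectory of `H` starting in `S`, the first coordinates are nondecreasing,
the remaining coordinates are nonincreasing, and the trajectory converges to a fixed
point of `H`. -/
theorem evolH_monotone_and_limit_exists (n ν : ℕ)
    (z : (Fin (n + 1) → ℝ) × (Fin (ν + 1) → ℝ))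
    (hz : z ∈ stdSimplex ℝ (Fin (n + 1)) ×ˢ stdSimplex ℝ (Fin (ν + 1))) :
    Monotone (fun m : ℕ => ((evolH n ν)^[m] z).1 0) ∧
    Monotone (fun m : ℕ => ((evolH n ν)^[m] z).2 0) ∧
    (∀ j : Fin (n + 1), j ≠ 0 → Antitone (fun m : ℕ => ((evolH n ν)^[m] z).1 j)) ∧
    (∀ l : Fin (ν + 1), l ≠ 0 → Antitone (fun m : ℕ => ((evolH n ν)^[m] z).2 l)) ∧
    ∃ zs : (Fin (n + 1) → ℝ) × (Fin (ν + 1) → ℝ),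
      Tendsto (fun m => (evolH n ν)^[m] z) atTop (𝓝 zs) ∧ evolH n ν zs = zs := by
  have hb : z ∈ headBounded n ×ˢ headBounded ν :=
    prod_mono (stdSimplex_subset_headBounded n) (stdSimplex_subset_headBounded ν) hz
  have hb' : z.swap ∈ headBounded ν ×ˢ headBounded n := ⟨hb.2, hb.1⟩
  simp only [iterate_evolH_snd]
  refine ⟨monotone_iterate_evolH_fst_zero hb, monotone_iterate_evolH_fst_zero hb',
    fun j => antitone_iterate_evolH_fst hb, fun l => antitone_iterate_evolH_fst hb', ?_⟩
  obtain ⟨zs, hzs⟩ := exists_tendsto_iterate_evolH hb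
  exact ⟨zs, hzs, isFixedPt_of_tendsto_iterate hzs continuous_evolH.continuousAt⟩
end

section
/- Assume a,b,c,d ∈ [0,1] satisfy b(d−c) = b−a and c(b−1) ≠ 1−d. Then the denominators c(1−b)+(1−d) and a(1−d)+c(1−b)+(1−b)(1−d) are nonzero, and the point P_0 = ( a(1−d) / (a(1−d)+c(1−b)+(1−b)(1−d)) , c(1−b) / (c(1−b)+(1−d)) ) is a fixed point of the operator T. -/
/-!
Eliminating `a` through `b (d − c) = b − a` factors the first denominator as
`(1 − b d)(c + (1 − d))`. On `[0,1]` either factor can vanish only when `d = 1` and `c (1 − b) = 0`,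
i.e. when the second denominator `c (1 − b) + (1 − d)` vanishes, which `c (b − 1) ≠ 1 − d` forbids.
Once both denominators are nonzero, the fixed-point equations are polynomial identities modulo
`b (d − c) = b − a`.
-/

/-- The evolution operator `T(x,y) = ((1−y)(a+(b−a)x), (1−x)(c+(d−c)y))` on `[0,1]²`. -/
def opT (a b c d : ℝ) (p : ℝ × ℝ) : ℝ × ℝ :=
  ((1 - p.2) * (a + (b - a) * p.1), (1 - p.1) * (c + (d - c) * p.2))

section FixedPoint

variable {a b c d : ℝ}

lemma fst_denom_eq_mul (h1 : b * (d - c) = b - a) :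
    a * (1 - d) + c * (1 - b) + (1 - b) * (1 - d) = (1 - b * d) * (c + (1 - d)) := by
  linear_combination (1 - d) * h1

lemma snd_denom_ne_zero (h2 : c * (b - 1) ≠ 1 - d) : c * (1 - b) + (1 - d) ≠ 0 :=
  fun h ↦ h2 (by linarith)

lemma fst_denom_ne_zero (hb0 : 0 ≤ b) (hb1 : b ≤ 1) (hc0 : 0 ≤ c) (hd1 : d ≤ 1)
    (h1 : b * (d - c) = b - a) (hD : c * (1 - b) + (1 - d) ≠ 0) :
    a * (1 - d) + c * (1 - b) + (1 - b) * (1 - d) ≠ 0 := by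
  rw [fst_denom_eq_mul h1]
  refine mul_ne_zero (fun hbd ↦ hD ?_) (fun hcd ↦ hD ?_)
  · obtain rfl : b = 1 := by nlinarith
    obtain rfl : d = 1 := by linarith
    ring
  · obtain rfl : c = 0 := by linarith
    obtain rfl : d = 1 := by linarith
    ring

/-- The denominators are named `E` and `F` so that `field_simp` clears them as atoms. -/
lemma isFixedPt_opT {E F : ℝ} (hE : E = a * (1 - d) + c * (1 - b) + (1 - b) * (1 - d))
    (hF : F = c * (1 - b) + (1 - d)) (hE0 : E ≠ 0) (hF0 : F ≠ 0)
    (h1 : b * (d - c) = b - a) :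
    Function.IsFixedPt (opT a b c d) (a * (1 - d) / E, c * (1 - b) / F) := by
  rw [Function.IsFixedPt, opT, Prod.mk.injEq]
  constructor
  · field_simp
    subst hE hF
    ring
  · field_simp
    subst hE hF
    linear_combination (-(c * (1 - b) * (1 - d))) * h1

end FixedPoint

theorem fix_opT_P0_general (a b c d : ℝ)
    (hb : b ∈ Set.Icc (0 : ℝ) 1)
    (hc : c ∈ Set.Icc (0 : ℝ) 1) (hd : d ∈ Set.Icc (0 : ℝ) 1)
    (h1 : b * (d - c) = b - a) (h2 : c * (b - 1) ≠ 1 - d) :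
    c * (1 - b) + (1 - d) ≠ 0 ∧
    a * (1 - d) + c * (1 - b) + (1 - b) * (1 - d) ≠ 0 ∧
    opT a b c d
        (a * (1 - d) / (a * (1 - d) + c * (1 - b) + (1 - b) * (1 - d)),
          c * (1 - b) / (c * (1 - b) + (1 - d))) =
      (a * (1 - d) / (a * (1 - d) + c * (1 - b) + (1 - b) * (1 - d)),
        c * (1 - b) / (c * (1 - b) + (1 - d))) := by
  have hF := snd_denom_ne_zero h2
  have hE := fst_denom_ne_zero hb.1 hb.2 hc.1 hd.2 h1 hF
  exact ⟨hF, hE, isFixedPt_opT rfl rfl hE hF h1⟩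

/-- If `b(d−c) = b−a` and `c(b−1) ≠ 1−d`, the denominators are nonzero and `P₀` is a
fixed point of `T`. -/
theorem fix_opT_P0 (a b c d : ℝ)
    (ha : a ∈ Set.Icc (0 : ℝ) 1) (hb : b ∈ Set.Icc (0 : ℝ) 1)
    (hc : c ∈ Set.Icc (0 : ℝ) 1) (hd : d ∈ Set.Icc (0 : ℝ) 1)
    (h1 : b * (d - c) = b - a) (h2 : c * (b - 1) ≠ 1 - d) :
    c * (1 - b) + (1 - d) ≠ 0 ∧
    a * (1 - d) + c * (1 - b) + (1 - b) * (1 - d) ≠ 0 ∧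
    opT a b c d
        (a * (1 - d) / (a * (1 - d) + c * (1 - b) + (1 - b) * (1 - d)),
          c * (1 - b) / (c * (1 - b) + (1 - d))) =
      (a * (1 - d) / (a * (1 - d) + c * (1 - b) + (1 - b) * (1 - d)),
        c * (1 - b) / (c * (1 - b) + (1 - d))) :=
  fix_opT_P0_general a b c d hb hc hd h1 h2
end

section
/- Assume a,b,c,d ∈ [0,1] with a = c, a ≠ 0, and b = d = 1. Then for every y ∈ [0,1] the point P(y) = ( a(1−y) / (a(1−y)+y) , y ) is a fixed point of the operator T; in particular T has a continuum of fixed points. -/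
open Set Cardinal

/- For `b = d = 1` and `a = c`, both coordinates of `T(x, y) - (x, y)` are equal to
`a(1 - y) - x (a(1 - y) + y)`, so the fixed points form the graph `x = a(1-y)/(a(1-y)+y)`. -/
theorem opT_eq_self_iff (a x y : ℝ) :
    opT a 1 a 1 (x, y) = (x, y) ↔ x * (a * (1 - y) + y) = a * (1 - y) := by
  simp only [opT, Prod.mk.injEq]
  constructor
  · rintro ⟨hx, -⟩
    linear_combination -hx
  · intro h
    constructor <;> linear_combination -h

theorem mk_eq_continuum_of_injOn_Icc {α : Type} (hα : #α ≤ 𝔠) {s : Set α} {f : ℝ → α}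
    (hf : InjOn f (Icc 0 1)) (hfs : MapsTo f (Icc 0 1) s) : #s = 𝔠 := by
  refine le_antisymm ((mk_set_le s).trans hα) ?_
  calc 𝔠 = #(Icc (0 : ℝ) 1) := by rw [mk_Icc_real zero_lt_one]
    _ = #(f '' Icc 0 1) := (mk_image_eq_of_injOn f _ hf).symm
    _ ≤ #s := mk_le_mk_of_subset hfs.image_subset

section FixedCurve

variable {a y : ℝ}

theorem curve_denom_pos (ha : 0 < a) (hy : y ∈ Icc (0 : ℝ) 1) : 0 < a * (1 - y) + y := by
  rcases hy.1.eq_or_lt with rfl | hy0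
  · simpa using ha
  · nlinarith [hy.2]

theorem opT_curve_eq_self (ha : 0 < a) (hy : y ∈ Icc (0 : ℝ) 1) :
    opT a 1 a 1 (a * (1 - y) / (a * (1 - y) + y), y) = (a * (1 - y) / (a * (1 - y) + y), y) :=
  (opT_eq_self_iff _ _ _).2 (div_mul_cancel₀ _ (curve_denom_pos ha hy).ne')

theorem curve_mem_Icc (ha : 0 < a) (hy : y ∈ Icc (0 : ℝ) 1) :
    a * (1 - y) / (a * (1 - y) + y) ∈ Icc (0 : ℝ) 1 := by
  have hD := curve_denom_pos ha hy
  exact ⟨div_nonneg (mul_nonneg ha.le (sub_nonneg.2 hy.2)) hD.le,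
    (div_le_one hD).2 (le_add_of_nonneg_right hy.1)⟩

end FixedCurve

/-- If `a = c ≠ 0` and `b = d = 1`, then every point `P(y) = (a(1−y)/(a(1−y)+y), y)`,
`y ∈ [0,1]`, is a fixed point of `T`; in particular `T` has a continuum of fixed
points in `[0,1]²`. -/
theorem fix_opT_curve (a : ℝ) (ha : a ∈ Set.Icc (0 : ℝ) 1) (ha0 : a ≠ 0) :
    (∀ y ∈ Set.Icc (0 : ℝ) 1,
      opT a 1 a 1 (a * (1 - y) / (a * (1 - y) + y), y) =
        (a * (1 - y) / (a * (1 - y) + y), y)) ∧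
    Cardinal.mk {p : ℝ × ℝ //
        p ∈ Set.Icc (0 : ℝ) 1 ×ˢ Set.Icc (0 : ℝ) 1 ∧ opT a 1 a 1 p = p} =
      Cardinal.continuum := by
  have hapos : 0 < a := ha.1.lt_of_ne' ha0
  refine ⟨fun y hy => opT_curve_eq_self hapos hy, ?_⟩
  refine mk_eq_continuum_of_injOn_Icc (s := {p | _}) (by simp [mk_real])
    (f := fun y => (a * (1 - y) / (a * (1 - y) + y), y))
    (fun y _ z _ h => congrArg Prod.snd h) fun y hy => ?_
  exact ⟨⟨curve_mem_Icc hapos hy, hy⟩, opT_curve_eq_self hapos hy⟩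
end

section
/- Let a,b ∈ [0,1] with 0 ≤ b < 1 and 1 − (1−b)²/4 < a ≤ 1. Then a > b, the discriminant (1−b)² − 4(1−a) is positive, the two points p_1 = (2a−b−1−√((1−b)²−4(1−a))) / (2(a−b)) and p_2 = (2a−b−1+√((1−b)²−4(1−a))) / (2(a−b)) are distinct, lie in [0,1], and form a 2-cycle of f: f(p_1) = p_2 and f(p_2) = p_1. -/
/-- The one-dimensional map `f(x) = (1−x)(a+(b−a)x)`. -/
def fmap (a b x : ℝ) : ℝ := (1 - x) * (a + (b - a) * x)

/-!
With `d = a − b`, `d (p + q) = 2a − b − 1` gives `d · (f(p) − q) = (1 − a)(1 − a + b) − d² p q`.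
So every pair with that sum and product `(1 − a)(1 − a + b) / d²` is a 2-cycle of `f` (the
conditions are symmetric in `p, q`), and by Vieta `p₁, p₂` are such a pair: they are the roots of
`d x² − (2a − b − 1) x + (1 − a)(1 − a + b) / d`, of discriminant `D = (1 − b)² − 4(1 − a)`.
Both lie in `[0, 1]` because `D ≤ (2a − b − 1)²` and `D ≤ (1 − b)²`.
-/

theorem fmap_eq_of_vieta {a b p q : ℝ} (hab : a ≠ b)
    (hsum : (a - b) * (p + q) = 2 * a - b - 1)
    (hprod : (a - b) ^ 2 * (p * q) = (1 - a) * (1 - a + b)) :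
    fmap a b p = q := by
  have h : (a - b) * (fmap a b p - q) = 0 := by
    unfold fmap
    linear_combination ((a - b) * p - 1) * hsum - hprod
  exact sub_eq_zero.1 ((mul_eq_zero.1 h).resolve_left (sub_ne_zero.2 hab))

theorem mul_add_quadratic_roots {c d : ℝ} (D : ℝ) (hd : d ≠ 0) :
    d * ((c - √D) / (2 * d) + (c + √D) / (2 * d)) = c := by
  field_simp
  ring

theorem sq_mul_mul_quadratic_roots {c d D : ℝ} (hd : d ≠ 0) (hD : 0 ≤ D) :
    d ^ 2 * ((c - √D) / (2 * d) * ((c + √D) / (2 * d))) = (c ^ 2 - D) / 4 := by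
  field_simp
  linear_combination -4 * Real.sq_sqrt hD

/-- If `0 ≤ b < 1` and `1 − (1−b)²/4 < a ≤ 1`, then `a > b`, the discriminant
`(1−b)² − 4(1−a)` is positive, and the two points
`p_{1,2} = (2a−b−1 ∓ √((1−b)²−4(1−a)))/(2(a−b))` are distinct, lie in `[0,1]`,
and form a 2-cycle of `f`. -/
theorem fmap_two_cycle (a b : ℝ) (hb0 : 0 ≤ b) (hb1 : b < 1)
    (ha : 1 - (1 - b) ^ 2 / 4 < a) (ha1 : a ≤ 1) :
    b < a ∧ 0 < (1 - b) ^ 2 - 4 * (1 - a) ∧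
    (2 * a - b - 1 - Real.sqrt ((1 - b) ^ 2 - 4 * (1 - a))) / (2 * (a - b)) ≠
      (2 * a - b - 1 + Real.sqrt ((1 - b) ^ 2 - 4 * (1 - a))) / (2 * (a - b)) ∧
    (2 * a - b - 1 - Real.sqrt ((1 - b) ^ 2 - 4 * (1 - a))) / (2 * (a - b)) ∈
      Set.Icc (0 : ℝ) 1 ∧
    (2 * a - b - 1 + Real.sqrt ((1 - b) ^ 2 - 4 * (1 - a))) / (2 * (a - b)) ∈
      Set.Icc (0 : ℝ) 1 ∧
    fmap a b ((2 * a - b - 1 - Real.sqrt ((1 - b) ^ 2 - 4 * (1 - a))) / (2 * (a - b))) =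
      (2 * a - b - 1 + Real.sqrt ((1 - b) ^ 2 - 4 * (1 - a))) / (2 * (a - b)) ∧
    fmap a b ((2 * a - b - 1 + Real.sqrt ((1 - b) ^ 2 - 4 * (1 - a))) / (2 * (a - b))) =
      (2 * a - b - 1 - Real.sqrt ((1 - b) ^ 2 - 4 * (1 - a))) / (2 * (a - b)) := by
  have hD : 0 < (1 - b) ^ 2 - 4 * (1 - a) := by linarith
  have hba : b < a := by nlinarith
  have hd : 0 < 2 * (a - b) := by linarith
  have hsqrt_pos : 0 < √((1 - b) ^ 2 - 4 * (1 - a)) := Real.sqrt_pos.2 hD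
  have hsqrt_le_c : √((1 - b) ^ 2 - 4 * (1 - a)) ≤ 2 * a - b - 1 :=
    Real.sqrt_le_iff.2 ⟨by nlinarith, by nlinarith⟩
  have hsqrt_le_one_sub_b : √((1 - b) ^ 2 - 4 * (1 - a)) ≤ 1 - b :=
    Real.sqrt_le_iff.2 ⟨by linarith, by linarith⟩
  have hne : a - b ≠ 0 := sub_ne_zero.2 hba.ne'
  have hsum := mul_add_quadratic_roots (c := 2 * a - b - 1) ((1 - b) ^ 2 - 4 * (1 - a)) hne
  have hprod := (sq_mul_mul_quadratic_roots (c := 2 * a - b - 1) hne hD.le).trans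
    (by ring : _ = (1 - a) * (1 - a + b))
  refine ⟨hba, hD, (div_lt_div_of_pos_right (by linarith) hd).ne, ⟨?_, ?_⟩, ⟨?_, ?_⟩,
    fmap_eq_of_vieta hba.ne' hsum hprod, ?_⟩
  · exact div_nonneg (by linarith) hd.le
  · exact (div_le_one hd).2 (by linarith)
  · exact div_nonneg (by linarith) hd.le
  · exact (div_le_one hd).2 (by linarith)
  · exact fmap_eq_of_vieta hba.ne' (by linear_combination hsum)
      (by linear_combination hprod)
end

section
/- Let a,b ∈ [0,1] with 0 ≤ b < 1 and 1 − (1−b)²/4 < a ≤ 1, and let p_1, p_2 be the 2-periodic points of f, i.e. p_{1,2} = (2a−b−1∓√((1−b)²−4(1−a))) / (2(a−b)). Then (f∘f)'(p_1) = (f∘f)'(p_2) = f'(p_1) f'(p_2) = 4 − 4a + 2b − b², and |4 − 4a + 2b − b²| < 1; in particular both 2-periodic points are attracting. -/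
/-!
The 2-periodic points are `p(±s) = (2a − b − 1 ± s) / (2(a − b))` with `s² = (1 − b)² − 4(1 − a)`,
and `f` swaps them. Since `f' (p(s)) = s − 1`, the chain rule gives
`(f ∘ f)'(p(±s)) = (s − 1)(−s − 1) = 1 − s² = 4 − 4a + 2b − b²`, and the hypotheses on `a, b`
give `0 < s² ≤ 1`.
-/

theorem hasDerivAt_fmap (a b x : ℝ) :
    HasDerivAt (fmap a b) (b - 2 * a + 2 * (a - b) * x) x := by
  have h : HasDerivAt (fun x : ℝ => (1 - x) * (a + (b - a) * x))
      (-1 * (a + (b - a) * x) + (1 - x) * ((b - a) * 1)) x :=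
    ((hasDerivAt_id x).const_sub 1).mul (((hasDerivAt_id x).const_mul (b - a)).const_add a)
  exact h.congr_deriv (by ring)

theorem deriv_fmap_comp_fmap (a b x : ℝ) :
    deriv (fmap a b ∘ fmap a b) x = deriv (fmap a b) (fmap a b x) * deriv (fmap a b) x :=
  deriv_comp x (hasDerivAt_fmap a b _).differentiableAt (hasDerivAt_fmap a b x).differentiableAt

noncomputable def twoCyclePoint (a b s : ℝ) : ℝ := (2 * a - b - 1 + s) / (2 * (a - b))

theorem deriv_fmap_twoCyclePoint {a b : ℝ} (hab : a ≠ b) (s : ℝ) :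
    deriv (fmap a b) (twoCyclePoint a b s) = s - 1 := by
  have hab' : a - b ≠ 0 := sub_ne_zero.mpr hab
  rw [(hasDerivAt_fmap a b _).deriv, twoCyclePoint]
  field_simp
  ring

theorem fmap_twoCyclePoint {a b s : ℝ} (hab : a ≠ b) (hs : s ^ 2 = (1 - b) ^ 2 - 4 * (1 - a)) :
    fmap a b (twoCyclePoint a b s) = twoCyclePoint a b (-s) := by
  have hab' : a - b ≠ 0 := sub_ne_zero.mpr hab
  rw [fmap, twoCyclePoint, twoCyclePoint]
  field_simp
  linear_combination (a - b) * hs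

theorem deriv_fmap_comp_fmap_twoCyclePoint {a b s : ℝ} (hab : a ≠ b)
    (hs : s ^ 2 = (1 - b) ^ 2 - 4 * (1 - a)) :
    deriv (fmap a b ∘ fmap a b) (twoCyclePoint a b s) = 1 - s ^ 2 := by
  rw [deriv_fmap_comp_fmap, fmap_twoCyclePoint hab hs, deriv_fmap_twoCyclePoint hab,
    deriv_fmap_twoCyclePoint hab]
  ring

/-- If `0 ≤ b < 1` and `1 − (1−b)²/4 < a ≤ 1`, then at the 2-periodic points
`p_{1,2} = (2a−b−1 ∓ √((1−b)²−4(1−a)))/(2(a−b))` one has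
`(f∘f)'(p₁) = (f∘f)'(p₂) = f'(p₁)f'(p₂) = 4 − 4a + 2b − b²` with
`|4 − 4a + 2b − b²| < 1`; in particular both 2-periodic points are attracting. -/
theorem fmap_two_cycle_attracting (a b : ℝ) (hb0 : 0 ≤ b) (hb1 : b < 1)
    (ha : 1 - (1 - b) ^ 2 / 4 < a) (ha1 : a ≤ 1) :
    deriv (fmap a b ∘ fmap a b)
        ((2 * a - b - 1 - Real.sqrt ((1 - b) ^ 2 - 4 * (1 - a))) / (2 * (a - b))) =
      4 - 4 * a + 2 * b - b ^ 2 ∧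
    deriv (fmap a b ∘ fmap a b)
        ((2 * a - b - 1 + Real.sqrt ((1 - b) ^ 2 - 4 * (1 - a))) / (2 * (a - b))) =
      4 - 4 * a + 2 * b - b ^ 2 ∧
    deriv (fmap a b)
        ((2 * a - b - 1 - Real.sqrt ((1 - b) ^ 2 - 4 * (1 - a))) / (2 * (a - b))) *
      deriv (fmap a b)
        ((2 * a - b - 1 + Real.sqrt ((1 - b) ^ 2 - 4 * (1 - a))) / (2 * (a - b))) =
      4 - 4 * a + 2 * b - b ^ 2 ∧
    |4 - 4 * a + 2 * b - b ^ 2| < 1 := by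
  have hab : a ≠ b := by nlinarith
  have hD_pos : 0 < (1 - b) ^ 2 - 4 * (1 - a) := by linarith
  have hD_le : (1 - b) ^ 2 - 4 * (1 - a) ≤ 1 := by nlinarith
  set s := Real.sqrt ((1 - b) ^ 2 - 4 * (1 - a))
  have hs : s ^ 2 = (1 - b) ^ 2 - 4 * (1 - a) := Real.sq_sqrt hD_pos.le
  have hs_neg : (-s) ^ 2 = (1 - b) ^ 2 - 4 * (1 - a) := by rw [neg_sq, hs]
  have hp₁ : (2 * a - b - 1 - s) / (2 * (a - b)) = twoCyclePoint a b (-s) := by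
    rw [twoCyclePoint, sub_eq_add_neg]
  have hp₂ : (2 * a - b - 1 + s) / (2 * (a - b)) = twoCyclePoint a b s := rfl
  have hvalue : 4 - 4 * a + 2 * b - b ^ 2 = 1 - s ^ 2 := by rw [hs]; ring
  rw [hp₁, hp₂, hvalue]
  refine ⟨?_, deriv_fmap_comp_fmap_twoCyclePoint hab hs, ?_, ?_⟩
  · rw [deriv_fmap_comp_fmap_twoCyclePoint hab hs_neg, neg_sq]
  · rw [deriv_fmap_twoCyclePoint hab, deriv_fmap_twoCyclePoint hab]
    ring
  · rw [abs_lt, hs]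
    constructor <;> linarith
end
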